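/- Let P be a smooth manifold (finite-dimensional, Hausdorff, paracompact), let 𝒰 ⊆ P be an open subset with its induced smooth manifold structure, let p ∈ 𝒰, and let A be a local algebra with residue homomorphism 0_A : A → ℝ. Then the map that sends an identity-preserving ℝ-algebra homomorphism u : C^∞(𝒰) → A with 0_A ∘ u = ev_p to the homomorphism f ↦ u(f|_𝒰) on C^∞(P) is a bijection from the set A_p𝒰 = { u : C^∞(𝒰) → A algebra homomorphism : 0_A ∘ u = ev_p } onto the set A_pP = { v : C^∞(P) → A algebra homomorphism : 0_A ∘ v = ev_p }. -/

import Mathlib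

/-! Pick a bump function `χ` supported in `U` with `χ p = 1`. Whenever `0_A ∘ v = ev_p`, the
element `v χ` has residue `1` and is therefore a unit of the local algebra `A`. Multiplying by `χ`
and extending by zero gives a linear map `e : C^∞(U) → C^∞(P)` with `e (f|_U) = χ f`,
`(e g)|_U = χ|_U g` and `e g * e h = χ e (g h)`. The second identity shows that `u` is determined
by `u ∘ restrict`; the other two show that `g ↦ (v χ)⁻¹ v (e g)` is an algebra homomorphism
through which `v` factors. -/

open scoped Manifold
open TopologicalSpace

/-- Restriction of smooth real-valued functions on `P` to an open subset `U`, as an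
`ℝ`-algebra homomorphism `C^∞(P) → C^∞(U)`. -/
noncomputable def smoothRestrictAlgHom
    (E : Type) [NormedAddCommGroup E] [NormedSpace ℝ E]
    (H : Type) [TopologicalSpace H] (I : ModelWithCorners ℝ E H)
    (P : Type) [TopologicalSpace P] [ChartedSpace H P]
    (U : Opens P) :
    (ContMDiffMap I 𝓘(ℝ, ℝ) P ℝ (⊤ : ℕ∞)) →ₐ[ℝ] (ContMDiffMap I 𝓘(ℝ, ℝ) U ℝ (⊤ : ℕ∞)) where
  toFun f := ⟨fun x => f x, f.contMDiff.comp contMDiff_subtype_val⟩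
  map_one' := by ext x; rfl
  map_mul' f g := by ext x; rfl
  map_zero' := by ext x; rfl
  map_add' f g := by ext x; rfl
  commutes' r := by ext x; rfl

open scoped ContDiff

@[simp]
theorem smoothRestrictAlgHom_apply {E : Type} [NormedAddCommGroup E] [NormedSpace ℝ E]
    {H : Type} [TopologicalSpace H] {I : ModelWithCorners ℝ E H}
    {P : Type} [TopologicalSpace P] [ChartedSpace H P] {U : Opens P}
    (f : C^∞⟮I, P; ℝ⟯) (x : U) :
    smoothRestrictAlgHom E H I P U f x = f x :=
  rfl

theorem IsLocalRing.isUnit_of_algHom_apply_ne_zero {K A : Type*} [Field K] [CommRing A]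
    [Algebra K A] [IsLocalRing A] (ρ : A →ₐ[K] K) {a : A} (h : ρ a ≠ 0) : IsUnit a :=
  haveI := IsLocalHom.of_surjective (ρ : A →+* K) fun r => ⟨algebraMap K A r, ρ.commutes r⟩
  isUnit_of_map_unit (ρ : A →+* K) a h.isUnit

namespace AlgHom

variable {R A B C : Type*} [CommSemiring R] [CommSemiring A] [Semiring B] [Semiring C]
  [Algebra R A] [Algebra R B] [Algebra R C]

theorem eq_of_comp_eq_of_isUnit (π : B →ₐ[R] C) (c : B) (hc : ∀ x, π c * x ∈ Set.range π)
    {u₁ u₂ : C →ₐ[R] A} (hu : IsUnit (u₁ (π c))) (h : u₁.comp π = u₂.comp π) : u₁ = u₂ := by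
  have hπ : ∀ y, u₁ (π y) = u₂ (π y) := fun y => DFunLike.congr_fun h y
  ext x
  obtain ⟨y, hy⟩ := hc x
  have := hπ y
  rw [hy, map_mul, map_mul, ← hπ c] at this
  exact hu.mul_left_cancel this

noncomputable def ofTwistedMul (v : B →ₐ[R] A) (e : C →ₗ[R] B) (c : B) (hc : IsUnit (v c))
    (he_one : e 1 = c) (he_mul : ∀ x y, e x * e y = c * e (x * y)) : C →ₐ[R] A where
  toFun x := ↑hc.unit⁻¹ * v (e x)
  map_one' := by simp [he_one]
  map_mul' x y := by
    calc ↑hc.unit⁻¹ * v (e (x * y))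
        = ↑hc.unit⁻¹ * (↑hc.unit⁻¹ * v c) * v (e (x * y)) := by rw [hc.val_inv_mul, mul_one]
      _ = ↑hc.unit⁻¹ * ↑hc.unit⁻¹ * v (c * e (x * y)) := by rw [map_mul v]; ring
      _ = ↑hc.unit⁻¹ * v (e x) * (↑hc.unit⁻¹ * v (e y)) := by rw [← he_mul, map_mul v]; ring
  map_zero' := by simp
  map_add' x y := by simp [mul_add]
  commutes' r := by
    rw [Algebra.algebraMap_eq_smul_one, map_smul, he_one, map_smul, mul_smul_comm]
    simp [Algebra.algebraMap_eq_smul_one]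

variable {v : B →ₐ[R] A} {e : C →ₗ[R] B} {c : B} {hc : IsUnit (v c)} {he_one : e 1 = c}
  {he_mul : ∀ x y, e x * e y = c * e (x * y)}

theorem ofTwistedMul_apply (x : C) :
    ofTwistedMul v e c hc he_one he_mul x = ↑hc.unit⁻¹ * v (e x) :=
  rfl

theorem ofTwistedMul_comp (π : B →ₐ[R] C) (h : ∀ y, e (π y) = c * y) :
    (ofTwistedMul v e c hc he_one he_mul).comp π = v := by
  ext y
  rw [comp_apply, ofTwistedMul_apply, h, map_mul, ← mul_assoc, hc.val_inv_mul, one_mul]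

end AlgHom

section MulExtendByZero

variable {E : Type} [NormedAddCommGroup E] [NormedSpace ℝ E]
  {H : Type} [TopologicalSpace H] {I : ModelWithCorners ℝ E H}
  {P : Type} [TopologicalSpace P] [ChartedSpace H P] [T2Space P] {U : Opens P}
  (χ : C^∞⟮I, P; ℝ⟯) (hχ : HasCompactSupport χ) (hχU : tsupport χ ⊆ U)

noncomputable def mulExtendByZero : C^∞⟮I, U; ℝ⟯ →ₗ[ℝ] C^∞⟮I, P; ℝ⟯ where
  toFun g := by
    refine ⟨Function.extend Subtype.val (fun x : U => χ x * g x) 0, ?_⟩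
    have hK : IsCompact ((Subtype.val : U → P) ⁻¹' tsupport χ) := by
      rw [Subtype.isCompact_iff, Set.image_preimage_eq_inter_range, Subtype.range_coe,
        Set.inter_eq_self_of_subset_left hχU]
      exact hχ
    have hsub : tsupport (fun x : U => χ x * g x) ⊆ (Subtype.val : U → P) ⁻¹' tsupport χ :=
      closure_minimal (fun x hx => subset_closure (left_ne_zero_of_mul hx))
        ((isClosed_tsupport χ).preimage continuous_subtype_val)
    exact ContMDiff.extend_zero (hK.of_isClosed_subset isClosed_closure hsub)
      ((χ.contMDiff.comp contMDiff_subtype_val).mul g.contMDiff)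
  map_add' g h := ContMDiffMap.coe_injective <| by
    change Function.extend Subtype.val (fun x : U => χ x * (g x + h x)) 0 =
      Function.extend Subtype.val (fun x : U => χ x * g x) 0 +
        Function.extend Subtype.val (fun x : U => χ x * h x) 0
    rw [← Function.extend_add, add_zero]
    simp only [mul_add]
    rfl
  map_smul' r g := ContMDiffMap.coe_injective <| by
    change Function.extend Subtype.val (fun x : U => χ x * (r * g x)) 0 =
      r • Function.extend Subtype.val (fun x : U => χ x * g x) 0
    rw [← Function.extend_smul, smul_zero]
    simp only [mul_left_comm]
    rfl

variable {χ hχ hχU}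

theorem mulExtendByZero_apply_of_mem (g : C^∞⟮I, U; ℝ⟯) {x : P} (hx : x ∈ U) :
    mulExtendByZero χ hχ hχU g x = χ x * g ⟨x, hx⟩ :=
  Subtype.val_injective.extend_apply (fun x : U => χ x * g x) 0 ⟨x, hx⟩

theorem mulExtendByZero_apply_of_notMem (g : C^∞⟮I, U; ℝ⟯) {x : P} (hx : x ∉ U) :
    mulExtendByZero χ hχ hχU g x = 0 :=
  Function.extend_apply' (f := Subtype.val) (fun x : U => χ x * g x) 0 x
    (by rintro ⟨a, rfl⟩; exact hx a.2)

theorem mulExtendByZero_restrict (f : C^∞⟮I, P; ℝ⟯) :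
    mulExtendByZero χ hχ hχU (smoothRestrictAlgHom E H I P U f) = χ * f := by
  ext x
  by_cases hx : x ∈ U
  · simp [mulExtendByZero_apply_of_mem _ hx]
  · have hχx : χ x = 0 := image_eq_zero_of_notMem_tsupport fun h => hx (hχU h)
    simp [mulExtendByZero_apply_of_notMem _ hx, hχx]

theorem mulExtendByZero_one : mulExtendByZero χ hχ hχU 1 = χ := by
  simpa using mulExtendByZero_restrict (hχ := hχ) (hχU := hχU) 1

theorem restrict_mulExtendByZero (g : C^∞⟮I, U; ℝ⟯) :
    smoothRestrictAlgHom E H I P U (mulExtendByZero χ hχ hχU g) =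
      smoothRestrictAlgHom E H I P U χ * g := by
  ext x
  simp [mulExtendByZero_apply_of_mem _ x.2]

theorem mulExtendByZero_mul_mulExtendByZero (g h : C^∞⟮I, U; ℝ⟯) :
    mulExtendByZero χ hχ hχU g * mulExtendByZero χ hχ hχU h =
      χ * mulExtendByZero χ hχ hχU (g * h) := by
  ext x
  by_cases hx : x ∈ U
  · simp only [ContMDiffMap.coe_mul, Pi.mul_apply, mulExtendByZero_apply_of_mem _ hx]
    ring
  · simp [mulExtendByZero_apply_of_notMem _ hx]

end MulExtendByZero

theorem pointsProches_open_inclusion_bijective_general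
    (E : Type) [NormedAddCommGroup E] [NormedSpace ℝ E] [FiniteDimensional ℝ E]
    (H : Type) [TopologicalSpace H] (I : ModelWithCorners ℝ E H)
    (P : Type) [TopologicalSpace P] [ChartedSpace H P] [IsManifold I (⊤ : ℕ∞) P]
    [T2Space P]
    (U : Opens P) (p : P) (hp : p ∈ U)
    (A : Type) [CommRing A] [Algebra ℝ A] [IsLocalRing A]
    (ρ : A →ₐ[ℝ] ℝ) :
    Set.BijOn
      (fun u : (ContMDiffMap I 𝓘(ℝ, ℝ) U ℝ (⊤ : ℕ∞)) →ₐ[ℝ] A =>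
        u.comp (smoothRestrictAlgHom E H I P U))
      {u : (ContMDiffMap I 𝓘(ℝ, ℝ) U ℝ (⊤ : ℕ∞)) →ₐ[ℝ] A |
        ∀ g : ContMDiffMap I 𝓘(ℝ, ℝ) U ℝ (⊤ : ℕ∞), ρ (u g) = g ⟨p, hp⟩}
      {v : (ContMDiffMap I 𝓘(ℝ, ℝ) P ℝ (⊤ : ℕ∞)) →ₐ[ℝ] A |
        ∀ f : ContMDiffMap I 𝓘(ℝ, ℝ) P ℝ (⊤ : ℕ∞), ρ (v f) = f p} := by
  obtain ⟨χ, -, hχU⟩ :=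
    (SmoothBumpFunction.nhds_basis_tsupport (I := I) p).mem_iff.1 (U.isOpen.mem_nhds hp)
  set c : C^∞⟮I, P; ℝ⟯ := ⟨χ, χ.contMDiff⟩
  set e := mulExtendByZero c χ.hasCompactSupport hχU
  set π := smoothRestrictAlgHom E H I P U
  have hcp : c p = 1 := χ.eq_one
  have hunit : ∀ v : C^∞⟮I, P; ℝ⟯ →ₐ[ℝ] A, (∀ f, ρ (v f) = f p) → IsUnit (v c) :=
    fun v hv => IsLocalRing.isUnit_of_algHom_apply_ne_zero ρ (by simp [hv, hcp])
  refine ⟨fun u hu f => hu (π f), fun u₁ hu₁ u₂ _ h => ?_, fun v hv => ?_⟩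
  · refine AlgHom.eq_of_comp_eq_of_isUnit π c (fun g => ⟨e g, restrict_mulExtendByZero g⟩) ?_ h
    exact hunit (u₁.comp π) fun f => hu₁ (π f)
  · refine ⟨AlgHom.ofTwistedMul v e c (hunit v hv) mulExtendByZero_one
      mulExtendByZero_mul_mulExtendByZero, fun g => ?_,
      AlgHom.ofTwistedMul_comp π mulExtendByZero_restrict⟩
    rw [AlgHom.ofTwistedMul_apply, map_mul, map_units_inv, IsUnit.unit_spec, hv, hv,
      mulExtendByZero_apply_of_mem _ hp, hcp, inv_one, one_mul, one_mul]

/-- Let `P` be a smooth manifold (finite-dimensional, Hausdorff,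
paracompact), `𝒰 ⊆ P` an open subset with its induced smooth manifold structure, `p ∈ 𝒰`, and
`A` a local algebra with residue homomorphism `0_A : A → ℝ`.  Then the map sending an
identity-preserving `ℝ`-algebra homomorphism `u : C^∞(𝒰) → A` with `0_A ∘ u = ev_p` to the
homomorphism `f ↦ u(f|_𝒰)` on `C^∞(P)` is a bijection from the set
`A_p𝒰 = {u : C^∞(𝒰) → A | 0_A ∘ u = ev_p}` onto `A_pP = {v : C^∞(P) → A | 0_A ∘ v = ev_p}`. -/
theorem pointsProches_open_inclusion_bijective
    (E : Type) [NormedAddCommGroup E] [NormedSpace ℝ E] [FiniteDimensional ℝ E]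
    (H : Type) [TopologicalSpace H] (I : ModelWithCorners ℝ E H)
    (P : Type) [TopologicalSpace P] [ChartedSpace H P] [IsManifold I (⊤ : ℕ∞) P]
    [T2Space P] [ParacompactSpace P]
    (U : Opens P) (p : P) (hp : p ∈ U)
    (A : Type) [CommRing A] [Algebra ℝ A] [FiniteDimensional ℝ A] [IsLocalRing A]
    (hres : Nonempty (IsLocalRing.ResidueField A ≃ₐ[ℝ] ℝ))
    (ρ : A →ₐ[ℝ] ℝ) :
    Set.BijOn
      (fun u : (ContMDiffMap I 𝓘(ℝ, ℝ) U ℝ (⊤ : ℕ∞)) →ₐ[ℝ] A =>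
        u.comp (smoothRestrictAlgHom E H I P U))
      {u : (ContMDiffMap I 𝓘(ℝ, ℝ) U ℝ (⊤ : ℕ∞)) →ₐ[ℝ] A |
        ∀ g : ContMDiffMap I 𝓘(ℝ, ℝ) U ℝ (⊤ : ℕ∞), ρ (u g) = g ⟨p, hp⟩}
      {v : (ContMDiffMap I 𝓘(ℝ, ℝ) P ℝ (⊤ : ℕ∞)) →ₐ[ℝ] A |
        ∀ f : ContMDiffMap I 𝓘(ℝ, ℝ) P ℝ (⊤ : ℕ∞), ρ (v f) = f p} :=
  pointsProches_open_inclusion_bijective_general E H I P U p hp A ρ
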